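/- Let (Kₙ)ₙ≥₁ be a decreasing sequence of compact subsets of ℝ³ (Kₙ₊₁ ⊆ Kₙ for every n) and let K = ⋂ₙ Kₙ. Then r(K) ≤ liminf_{n→∞} r(Kₙ). -/
import Mathlib


open Topology

noncomputable section

/-- Euclidean 3-space. -/
abbrev R3 := EuclideanSpace ℝ (Fin 3)

/-- The standard 2-simplex. -/
def Simp2 : Set (ℝ × ℝ) := {p | 0 ≤ p.1 ∧ 0 ≤ p.2 ∧ p.1 + p.2 ≤ 1}

/-- Face maps of the standard 2-simplex. -/
def face0 : C(unitInterval, Simp2) where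
  toFun t := ⟨(1 - t, t), ⟨by simpa using t.2.2, t.2.1, by simp⟩⟩
  continuous_toFun := by fun_prop

def face1 : C(unitInterval, Simp2) where
  toFun t := ⟨(0, t), ⟨le_refl 0, t.2.1, by simpa using t.2.2⟩⟩
  continuous_toFun := by fun_prop

def face2 : C(unitInterval, Simp2) where
  toFun t := ⟨(t, 0), ⟨t.2.1, le_refl 0, by simpa using t.2.2⟩⟩
  continuous_toFun := by fun_prop

/-- Boundary map on singular 1-chains with `ℤ/2` coefficients (in characteristic two,
signs are irrelevant). -/
def bd1 (X : Type) [TopologicalSpace X] :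
    (C(unitInterval, X) →₀ ZMod 2) →ₗ[ZMod 2] (X →₀ ZMod 2) :=
  Finsupp.lsum (ZMod 2) fun σ => Finsupp.lsingle (σ 1) + Finsupp.lsingle (σ 0)

/-- Boundary map on singular 2-chains with `ℤ/2` coefficients. -/
def bd2 (X : Type) [TopologicalSpace X] :
    (C(Simp2, X) →₀ ZMod 2) →ₗ[ZMod 2] (C(unitInterval, X) →₀ ZMod 2) :=
  Finsupp.lsum (ZMod 2) fun τ =>
    Finsupp.lsingle (τ.comp face0) + Finsupp.lsingle (τ.comp face1) +
      Finsupp.lsingle (τ.comp face2)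

/-- The boundaries, as a submodule of the cycles. -/
def B1 (X : Type) [TopologicalSpace X] :
    Submodule (ZMod 2) ↥(LinearMap.ker (bd1 X)) :=
  Submodule.comap (LinearMap.ker (bd1 X)).subtype (LinearMap.range (bd2 X))

/-- First singular homology with `ℤ/2` coefficients: 1-cycles modulo boundaries. -/
abbrev H1 (X : Type) [TopologicalSpace X] : Type :=
  ↥(LinearMap.ker (bd1 X)) ⧸ B1 X

/-- The rank of `H₁(X; ℤ/2)`, as a cardinal. -/
def H1rank (X : Type) [TopologicalSpace X] : Cardinal :=
  Module.rank (ZMod 2) (H1 X)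

/-- A polyhedron: the geometric realization (the `space`) of a finite simplicial
complex in `ℝ³`. -/
def IsPolyhedron (P : Set R3) : Prop :=
  ∃ C : Geometry.SimplicialComplex ℝ R3, C.faces.Finite ∧ P = C.space

/-- The closed half space in `ℝ³`. -/
def HalfSpace3 : Set R3 := {x : R3 | 0 ≤ x 0}

/-- `M` is a (topological) 3-manifold with (possibly empty) boundary: every point has
an open neighbourhood homeomorphic to `ℝ³` or to the closed half space. -/
def Is3ManifoldWithBoundary (M : Set R3) : Prop :=
  ∀ p : M, ∃ U : Set M, IsOpen U ∧ p ∈ U ∧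
    (Nonempty (U ≃ₜ R3) ∨ Nonempty (U ≃ₜ HalfSpace3))

/-- A pm-neighbourhood of `K`: a neighbourhood of `K` which is a compact polyhedral
3-manifold (with boundary). -/
def IsPMNbhd (K N : Set R3) : Prop :=
  N ∈ nhdsSet K ∧ IsCompact N ∧ IsPolyhedron N ∧ Is3ManifoldWithBoundary N

/-- Property `(P_r)`: `K` has arbitrarily small pm-neighbourhoods `N` with
`rk H₁(N; ℤ/2) ≤ r`. -/
def HasPropP (K : Set R3) (r : ℕ) : Prop :=
  ∀ U ∈ nhdsSet K, ∃ N, IsPMNbhd K N ∧ N ⊆ U ∧ H1rank N ≤ (r : Cardinal)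

/-- The invariant `r(K) ∈ ℕ∞`: the least `r` such that `(P_r)` holds, and `∞` if no
such `r` exists. -/
def rInv (K : Set R3) : ℕ∞ :=
  sInf {n : ℕ∞ | ∃ r : ℕ, n = (r : ℕ∞) ∧ HasPropP K r}

/-- The horizontal plane `ℝ² × {0}` in `ℝ³`. -/
def Plane12 : Set R3 := {x : R3 | x 2 = 0}

/-- `S` is locally flat at `p`: `p` has a neighbourhood `U` in `ℝ³` such that the pair
`(U, U ∩ S)` is homeomorphic to `(ℝ³, ℝ² × {0})`. -/
def IsLocallyFlatAt (S : Set R3) (p : R3) : Prop :=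
  ∃ U ∈ nhds p, ∃ e : U ≃ₜ R3, ∀ x : U, (x : R3) ∈ S ↔ (e x) ∈ Plane12

/-- A closed surface in `ℝ³`: a compact set, each of whose points has an open
neighbourhood (in the set) homeomorphic to `ℝ²`; i.e. a compact boundariless
topological 2-manifold. -/
def IsClosedSurface (S : Set R3) : Prop :=
  IsCompact S ∧ ∀ p : S, ∃ U : Set S, IsOpen U ∧ p ∈ U ∧
    Nonempty (U ≃ₜ EuclideanSpace ℝ (Fin 2))

/-- A straight line in `ℝ³`. -/
def IsStraightLine (L : Set R3) : Prop :=
  ∃ a v : R3, v ≠ 0 ∧ L = {x : R3 | ∃ t : ℝ, x = a + t • v}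

/-- A compact totally disconnected set is rectifiable if some ambient homeomorphism of
`ℝ³` sends it into a straight line. -/
def IsRectifiable (T : Set R3) : Prop :=
  ∃ h : R3 ≃ₜ R3, ∃ L : Set R3, IsStraightLine L ∧ h '' T ⊆ L

/-- `K` is an attractor for the homeomorphism `f` of `ℝ³`: `K` is compact and
invariant, and there is a neighbourhood `U` of `K` such that every compact `P ⊆ U`
eventually enters (and stays in) any given neighbourhood `V` of `K`. -/
def IsAttractor (f : R3 ≃ₜ R3) (K : Set R3) : Prop :=
  IsCompact K ∧ f '' K = K ∧
    ∃ U ∈ nhdsSet K, ∀ P : Set R3, P ⊆ U → IsCompact P →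
      ∀ V ∈ nhdsSet K, ∃ n₀ : ℕ, ∀ n ≥ n₀, (⇑f)^[n] '' P ⊆ V

/-- `S` bounds a 3-manifold: the closure of at least one connected component of the
complement of `S` is a 3-manifold with boundary. -/
def BoundsA3Manifold (S : Set R3) : Prop :=
  ∃ p ∉ S, Is3ManifoldWithBoundary (closure (connectedComponentIn Sᶜ p))

/-- A 3-cell: a set homeomorphic to the closed unit ball of `ℝ³`. -/
def IsCell3 (C : Set R3) : Prop :=
  Nonempty (C ≃ₜ Metric.closedBall (0 : R3) 1)



lemma hasPropP_mono {X : Set R3} {r r' : ℕ} (h : HasPropP X r) (hrr : r ≤ r') :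
    HasPropP X r' := fun U hU => by
  obtain ⟨N, h1, h2, h3⟩ := h U hU
  exact ⟨N, h1, h2, h3.trans (Nat.cast_le.mpr hrr)⟩

/-- **semicontinuity.** For a decreasing sequence of compact sets
`Kₙ` with intersection `K`, one has `r(K) ≤ liminf r(Kₙ)`. -/
theorem stmt5 (K : ℕ → Set R3) (hcomp : ∀ n, IsCompact (K n))
    (hdec : ∀ n, K (n + 1) ⊆ K n) :
    rInv (⋂ n, K n) ≤ Filter.liminf (fun n => rInv (K n)) Filter.atTop := by
  by_cases hL : Filter.liminf (fun n => rInv (K n)) Filter.atTop = ⊤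
  · rw [hL]; exact le_top
  obtain ⟨r, hr⟩ := WithTop.ne_top_iff_exists.mp hL
  rw [← hr]
  have hanti : Antitone K := antitone_nat_of_succ_le hdec
  -- frequently rInv (K m) ≤ r
  have hfreq : ∃ᶠ m in Filter.atTop, rInv (K m) ≤ (r : ℕ∞) := by
    have h1 : Filter.liminf (fun n => rInv (K n)) Filter.atTop < (r : ℕ∞) + 1 :=
      (ENat.lt_add_one_iff (WithTop.coe_ne_top)).mpr hr.ge
    have h2 := Filter.frequently_lt_of_liminf_lt (by isBoundedDefault) h1
    refine h2.mono fun m hm => ?_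
    exact (ENat.lt_add_one_iff (WithTop.coe_ne_top)).mp hm
  -- it suffices to show HasPropP
  have key : HasPropP (⋂ n, K n) r := by
    intro U hU
    obtain ⟨V, hVopen, hKV, hVU⟩ := mem_nhdsSet_iff_exists.mp hU
    -- find n₁ with K n₁ ⊆ V
    have hinter : K 0 ∩ ⋂ n, (K n \ V) = ∅ := by
      ext x
      simp only [Set.mem_inter_iff, Set.mem_iInter, Set.mem_diff, Set.mem_empty_iff_false,
        iff_false]
      rintro ⟨-, h⟩
      exact (h 0).2 (hKV (Set.mem_iInter.mpr fun n => (h n).1))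
    have hclosed : ∀ n, IsClosed (K n \ V) := fun n =>
      ((hcomp n).isClosed).sdiff hVopen
    have hdir : Directed (· ⊇ ·) (fun n => K n \ V) := fun m n =>
      ⟨max m n, Set.diff_subset_diff_left (hanti (le_max_left m n)),
        Set.diff_subset_diff_left (hanti (le_max_right m n))⟩
    obtain ⟨n₁, hn₁⟩ := (hcomp 0).elim_directed_family_closed (fun n => K n \ V)
      hclosed hinter hdir
    have hKn₁V : K n₁ ⊆ V := by
      intro x hx
      by_contra hxV
      exact absurd (Set.eq_empty_iff_forall_notMem.mp hn₁ x
        ⟨hanti (Nat.zero_le n₁) hx, hx, hxV⟩) (fun h => h)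
    obtain ⟨m, hmn₁, hm⟩ := Filter.frequently_atTop.mp hfreq n₁
    have hKmV : K m ⊆ V := (hanti hmn₁).trans hKn₁V
    -- rInv (K m) ≤ r gives some s ≤ r with HasPropP (K m) s
    have hne : {n : ℕ∞ | ∃ s : ℕ, n = (s : ℕ∞) ∧ HasPropP (K m) s}.Nonempty := by
      by_contra hemp
      rw [Set.not_nonempty_iff_eq_empty] at hemp
      rw [rInv, hemp, sInf_empty] at hm
      exact absurd (hm.trans_lt (WithTop.coe_lt_top r)) (lt_irrefl _)
    have hmem := csInf_mem hne
    obtain ⟨s, hseq, hsP⟩ := hmem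
    have hsr : s ≤ r := by
      have : (s : ℕ∞) ≤ (r : ℕ∞) := hseq ▸ hm
      exact_mod_cast this
    have hP : HasPropP (K m) r := hasPropP_mono hsP hsr
    obtain ⟨N, hN, hNV, hrank⟩ := hP V (hVopen.mem_nhdsSet.mpr hKmV)
    refine ⟨N, ⟨?_, hN.2.1, hN.2.2.1, hN.2.2.2⟩, hNV.trans hVU, hrank⟩
    exact nhdsSet_mono (Set.iInter_subset K m) hN.1
  exact sInf_le ⟨r, rfl, key⟩


end
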